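/- arXiv:1707.05369 — 5 statements merged into one kernel-verified Lean document; each statement's English description precedes it below -/
import Mathlib

section
/- Let α, β, ω, A be real numbers and let u : ℝ → ℝ be a twice differentiable solution of the cantilever beam equation u'' + ω²u + αu²u'' + αu(u')² + βω²u³ = 0 with initial conditions u(0) = A and u'(0) = 0. Then for every t ∈ ℝ, (1 + α u(t)²)·u'(t)² + ω²·u(t)²·(1 + (β/2)·u(t)²) = ω²·A²·(1 + (β/2)·A²). -/
/-!
Multiplying the equation by `2u'` turns its left-hand side into the time derivative of the
energy `(1 + αu²)u'² + ω²u²(1 + (β/2)u²)`, so the energy is constant and equals its value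
at `t = 0`, where `u' = 0`.
-/

noncomputable def cantileverEnergy (α β ω x v : ℝ) : ℝ :=
  (1 + α * x ^ 2) * v ^ 2 + ω ^ 2 * x ^ 2 * (1 + β / 2 * x ^ 2)

theorem hasDerivAt_cantileverEnergy (α β ω : ℝ) {x v : ℝ → ℝ} {a t : ℝ}
    (hx : HasDerivAt x (v t) t) (hv : HasDerivAt v a t) :
    HasDerivAt (fun s => cantileverEnergy α β ω (x s) (v s))
      (2 * v t * (a + ω ^ 2 * x t + α * x t ^ 2 * a + α * x t * v t ^ 2
        + β * ω ^ 2 * x t ^ 3)) t := by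
  have hE : HasDerivAt (fun s => cantileverEnergy α β ω (x s) (v s)) _ t :=
    ((((hx.fun_pow 2).const_mul α).const_add 1).fun_mul (hv.fun_pow 2)).fun_add
      (((hx.fun_pow 2).const_mul (ω ^ 2)).fun_mul (((hx.fun_pow 2).const_mul (β / 2)).const_add 1))
  exact hE.congr_deriv (by norm_num; ring)

theorem cantileverEnergy_eq_of_solution {α β ω : ℝ} {x v a : ℝ → ℝ}
    (hx : ∀ t, HasDerivAt x (v t) t) (hv : ∀ t, HasDerivAt v (a t) t)
    (hode : ∀ t, a t + ω ^ 2 * x t + α * x t ^ 2 * a t + α * x t * v t ^ 2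
      + β * ω ^ 2 * x t ^ 3 = 0) (t s : ℝ) :
    cantileverEnergy α β ω (x t) (v t) = cantileverEnergy α β ω (x s) (v s) := by
  have hE : ∀ t, HasDerivAt (fun s => cantileverEnergy α β ω (x s) (v s)) 0 t := fun t => by
    simpa [hode t] using hasDerivAt_cantileverEnergy α β ω (hx t) (hv t)
  exact is_const_of_deriv_eq_zero (fun t => (hE t).differentiableAt) (fun t => (hE t).deriv) t s

/-- Energy conservation (first integral) for the cantilever beam
equation `u'' + ω²u + αu²u'' + αu(u')² + βω²u³ = 0` with `u(0) = A`,
`u'(0) = 0`: for every `t`,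
`(1 + α u(t)²) u'(t)² + ω² u(t)² (1 + (β/2) u(t)²) = ω² A² (1 + (β/2) A²)`. -/
theorem cantilever_first_integral (α β ω A : ℝ) (u : ℝ → ℝ)
    (hu : ∀ t, DifferentiableAt ℝ u t)
    (hu' : ∀ t, DifferentiableAt ℝ (deriv u) t)
    (hode : ∀ t, deriv (deriv u) t + ω ^ 2 * u t
      + α * (u t) ^ 2 * deriv (deriv u) t + α * u t * (deriv u t) ^ 2
      + β * ω ^ 2 * (u t) ^ 3 = 0)
    (h0 : u 0 = A) (h0' : deriv u 0 = 0) :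
    ∀ t, (1 + α * (u t) ^ 2) * (deriv u t) ^ 2
      + ω ^ 2 * (u t) ^ 2 * (1 + β / 2 * (u t) ^ 2)
      = ω ^ 2 * A ^ 2 * (1 + β / 2 * A ^ 2) := by
  intro t
  have hconst := cantileverEnergy_eq_of_solution (fun t => (hu t).hasDerivAt)
    (fun t => (hu' t).hasDerivAt) hode t 0
  simpa [cantileverEnergy, h0, h0'] using hconst
end

section
/- Let α, β, ω be real numbers with ω ≠ 0, let A > 0, let T > 0, and let u : [0,T] → ℝ be a twice differentiable solution of the cantilever beam equation u'' + ω²u + αu²u'' + αu(u')² + βω²u³ = 0 with u(0) = A, u'(0) = 0, and suppose u'(t) < 0 for all t ∈ (0,T). Set C₀ = ω²A²(1 + (β/2)A²), and suppose 1 + αs² > 0 and C₀ − ω²s²(1 + (β/2)s²) > 0 for all s in the open interval (u(t), A) for each t ∈ (0,T). Then for every t ∈ (0,T), t = ∫_{u(t)}^{A} √((1 + αs²)/(C₀ − ω²s²(1 + (β/2)s²))) ds. -/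
open Set MeasureTheory Filter intervalIntegral Topology

/-- Quadrature formula for the cantilever beam equation: along a
monotonically decreasing solution with `u(0) = A`, `u'(0) = 0`, setting
`C₀ = ω²A²(1 + (β/2)A²)` and assuming positivity of `1 + αs²` and of
`C₀ − ω²s²(1 + (β/2)s²)` on `(u(t), A)`, one has
`t = ∫_{u(t)}^{A} √((1 + αs²)/(C₀ − ω²s²(1 + (β/2)s²))) ds` for `t ∈ (0, T)`. -/
theorem cantilever_quadrature (α β ω A T C₀ : ℝ) (hω : ω ≠ 0) (hA : 0 < A)
    (hT : 0 < T) (u : ℝ → ℝ)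
    (hu : ∀ t ∈ Set.Icc 0 T, DifferentiableAt ℝ u t)
    (hu' : ∀ t ∈ Set.Icc 0 T, DifferentiableAt ℝ (deriv u) t)
    (hode : ∀ t ∈ Set.Icc 0 T, deriv (deriv u) t + ω ^ 2 * u t
      + α * (u t) ^ 2 * deriv (deriv u) t + α * u t * (deriv u t) ^ 2
      + β * ω ^ 2 * (u t) ^ 3 = 0)
    (h0 : u 0 = A) (h0' : deriv u 0 = 0)
    (hdec : ∀ t ∈ Set.Ioo 0 T, deriv u t < 0)
    (hC : C₀ = ω ^ 2 * A ^ 2 * (1 + β / 2 * A ^ 2))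
    (hpos : ∀ t ∈ Set.Ioo 0 T, ∀ s ∈ Set.Ioo (u t) A,
      0 < 1 + α * s ^ 2 ∧ 0 < C₀ - ω ^ 2 * s ^ 2 * (1 + β / 2 * s ^ 2)) :
    ∀ t ∈ Set.Ioo 0 T, t = ∫ s in (u t)..A,
      Real.sqrt ((1 + α * s ^ 2) / (C₀ - ω ^ 2 * s ^ 2 * (1 + β / 2 * s ^ 2))) := by
  intro t ht
  set g : ℝ → ℝ := fun s =>
    Real.sqrt ((1 + α * s ^ 2) / (C₀ - ω ^ 2 * s ^ 2 * (1 + β / 2 * s ^ 2))) with hgdef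
  have hgnn : ∀ x, 0 ≤ g x := fun x => Real.sqrt_nonneg _
  -- basic continuity and monotonicity facts
  have hcont : ContinuousOn u (Set.Icc 0 T) :=
    fun x hx => (hu x hx).continuousAt.continuousWithinAt
  have hcont' : ContinuousOn (deriv u) (Set.Icc 0 T) :=
    fun x hx => (hu' x hx).continuousAt.continuousWithinAt
  have hanti : StrictAntiOn u (Set.Icc 0 T) := by
    apply strictAntiOn_of_deriv_neg (convex_Icc 0 T) hcont
    rw [interior_Icc]; exact hdec
  have hmem : ∀ τ : ℝ, 0 ≤ τ → τ ≤ T → τ ∈ Set.Icc (0:ℝ) T := fun τ h1 h2 => ⟨h1, h2⟩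
  have huA : ∀ τ : ℝ, 0 < τ → τ ≤ T → u τ < A := by
    intro τ h1 h2
    have := hanti (hmem 0 le_rfl hT.le) (hmem τ h1.le h2) h1
    rwa [h0] at this
  -- positivity on [u t, A)
  have hposA : ∀ s : ℝ, u t ≤ s → s < A →
      0 < 1 + α * s ^ 2 ∧ 0 < C₀ - ω ^ 2 * s ^ 2 * (1 + β / 2 * s ^ 2) := by
    intro s hs1 hs2
    have ht2 : (t + T) / 2 ∈ Set.Ioo (0:ℝ) T := by constructor <;> [linarith [ht.1, ht.2]; linarith [ht.2]]
    have h1 : u ((t + T) / 2) < u t :=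
      hanti (hmem t ht.1.le ht.2.le) (hmem _ (by linarith [ht.1]) (by linarith [ht.2])) (by linarith [ht.2])
    exact hpos _ ht2 s ⟨lt_of_lt_of_le h1 hs1, hs2⟩
  -- energy is constant
  set E : ℝ → ℝ := fun τ =>
    (1 + α * u τ ^ 2) * (deriv u τ) ^ 2 + ω ^ 2 * u τ ^ 2 * (1 + β / 2 * u τ ^ 2) with hEdef
  have hEcont : ContinuousOn E (Set.Icc 0 T) := by
    apply ContinuousOn.add
    · exact (continuousOn_const.add (continuousOn_const.mul (hcont.pow 2))).mul (hcont'.pow 2)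
    · exact (continuousOn_const.mul (hcont.pow 2)).mul
        (continuousOn_const.add (continuousOn_const.mul (hcont.pow 2)))
  have hEderiv : ∀ x ∈ Set.Ico (0:ℝ) T, HasDerivWithinAt E 0 (Set.Ici x) x := by
    intro x hx
    have hx' : x ∈ Set.Icc (0:ℝ) T := ⟨hx.1, hx.2.le⟩
    have h1 : HasDerivAt u (deriv u x) x := (hu x hx').hasDerivAt
    have h2 : HasDerivAt (deriv u) (deriv (deriv u) x) x := (hu' x hx').hasDerivAt
    have hA1 : HasDerivAt (fun τ => 1 + α * u τ ^ 2)
        (α * (2 * u x ^ 1 * deriv u x)) x := ((h1.pow 2).const_mul α).const_add 1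
    have hA2 : HasDerivAt (fun τ => (deriv u τ) ^ 2)
        (2 * deriv u x ^ 1 * deriv (deriv u) x) x := h2.pow 2
    have hB1 : HasDerivAt (fun τ => ω ^ 2 * u τ ^ 2)
        (ω ^ 2 * (2 * u x ^ 1 * deriv u x)) x := (h1.pow 2).const_mul (ω ^ 2)
    have hB2 : HasDerivAt (fun τ => 1 + β / 2 * u τ ^ 2)
        (β / 2 * (2 * u x ^ 1 * deriv u x)) x := ((h1.pow 2).const_mul (β / 2)).const_add 1
    have hall := (hA1.mul hA2).add (hB1.mul hB2)
    have hO := hode x hx'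
    have hzero : (α * (2 * u x ^ 1 * deriv u x)) * (deriv u x) ^ 2
        + (1 + α * u x ^ 2) * (2 * deriv u x ^ 1 * deriv (deriv u) x)
        + ((ω ^ 2 * (2 * u x ^ 1 * deriv u x)) * (1 + β / 2 * u x ^ 2)
          + (ω ^ 2 * u x ^ 2) * (β / 2 * (2 * u x ^ 1 * deriv u x))) = 0 := by
      linear_combination (2 * deriv u x) * hO
    rw [← hzero]
    exact hall.hasDerivWithinAt
  have hEconst : ∀ x ∈ Set.Icc (0:ℝ) T, E x = C₀ := by
    have h := constant_of_has_deriv_right_zero hEcont hEderiv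
    intro x hx
    rw [h x hx, hEdef]
    simp only [h0, h0']
    rw [hC]; ring
  -- key pointwise identity along the trajectory
  have key : ∀ τ : ℝ, 0 < τ → τ ≤ t → deriv u τ * g (u τ) = -1 := by
    intro τ h1 h2
    have hτT : τ < T := lt_of_le_of_lt h2 ht.2
    have hτIcc : τ ∈ Set.Icc (0:ℝ) T := ⟨h1.le, hτT.le⟩
    have hq : deriv u τ < 0 := hdec τ ⟨h1, hτT⟩
    have hut : u t ≤ u τ := by
      rcases eq_or_lt_of_le h2 with h | h
      · rw [h]
      · exact (hanti (hmem τ h1.le hτT.le) (hmem t ht.1.le ht.2.le) h).le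
    have huτA : u τ < A := huA τ h1 hτT.le
    obtain ⟨hp, hd⟩ := hposA (u τ) hut huτA
    have hen : (1 + α * u τ ^ 2) * (deriv u τ) ^ 2
        = C₀ - ω ^ 2 * u τ ^ 2 * (1 + β / 2 * u τ ^ 2) := by
      have := hEconst τ hτIcc
      rw [hEdef] at this
      linarith
    have hq0 : deriv u τ ≠ 0 := ne_of_lt hq
    have hp0 : (1 + α * u τ ^ 2) ≠ 0 := ne_of_gt hp
    have hfrac : (1 + α * u τ ^ 2) / (C₀ - ω ^ 2 * u τ ^ 2 * (1 + β / 2 * u τ ^ 2))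
        = (-1 / deriv u τ) ^ 2 := by
      rw [← hen]; field_simp
    have hinvpos : 0 < -1 / deriv u τ := by
      rw [div_pos_iff]; right; constructor <;> linarith
    have : g (u τ) = -1 / deriv u τ := by
      rw [hgdef]; simp only []
      rw [hfrac, Real.sqrt_sq hinvpos.le]
    rw [this]; field_simp
  -- the finite-interval quadrature
  have hstep : ∀ ε : ℝ, 0 < ε → ε ≤ t → (∫ s in (u t)..(u ε), g s) = t - ε := by
    intro ε hε hεt
    have hεT : ε ≤ T := le_trans hεt ht.2.le
    have hIcc : Set.uIcc ε t = Set.Icc ε t := Set.uIcc_of_le hεt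
    have hsub : Set.Icc ε t ⊆ Set.Icc 0 T := Set.Icc_subset_Icc hε.le ht.2.le
    have himg : u '' Set.uIcc ε t ⊆ Set.Icc (u t) (u ε) := by
      rw [hIcc]
      rintro _ ⟨x, hx, rfl⟩
      exact ⟨hanti.antitoneOn (hsub hx) (hmem t ht.1.le ht.2.le) hx.2,
             hanti.antitoneOn (hmem ε hε.le hεT) (hsub hx) hx.1⟩
    have hgcont : ContinuousOn g (Set.Icc (u t) (u ε)) := by
      intro s hs
      have hsA : s < A := lt_of_le_of_lt hs.2
        (huA ε hε (le_trans hεt ht.2.le))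
      obtain ⟨hp, hd⟩ := hposA s hs.1 hsA
      apply ContinuousAt.continuousWithinAt
      apply Real.continuous_sqrt.continuousAt.comp
      exact ContinuousAt.div (by fun_prop) (by fun_prop) (ne_of_gt hd)
    have h1 : (∫ x in ε..t, deriv u x • (g ∘ u) x) = ∫ s in (u ε)..(u t), g s := by
      apply intervalIntegral.integral_comp_smul_deriv''
      · exact hcont.mono (hIcc ▸ hsub)
      · intro x hx
        rw [min_eq_left hεt, max_eq_right hεt] at hx
        exact ((hu x (hsub (Set.Ioo_subset_Icc_self hx))).hasDerivAt).hasDerivWithinAt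
      · exact hcont'.mono (hIcc ▸ hsub)
      · exact hgcont.mono himg
    have h2 : (∫ x in ε..t, deriv u x • (g ∘ u) x) = ε - t := by
      rw [intervalIntegral.integral_congr (g := fun _ => (-1:ℝ))]
      · rw [intervalIntegral.integral_const]; simp
      · intro x hx
        rw [hIcc] at hx
        have := key x (lt_of_lt_of_le hε hx.1) hx.2
        simpa [Function.comp] using this
    rw [intervalIntegral.integral_symm (u t) (u ε)] at h1
    linarith [h1, h2]
  -- the approximating sequence
  set e : ℕ → ℝ := fun n => t / (n + 2) with hedef
  have he_pos : ∀ n, 0 < e n := fun n => div_pos ht.1 (by positivity)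
  have he_lt : ∀ n, e n < t := by
    intro n
    rw [hedef]
    rw [div_lt_iff₀ (by positivity)]
    nlinarith [ht.1, (Nat.cast_nonneg n : (0:ℝ) ≤ n)]
  have he_anti : ∀ m n : ℕ, m ≤ n → e n ≤ e m := by
    intro m n hmn
    apply div_le_div_of_nonneg_left ht.1.le (by positivity)
    have : (m : ℝ) ≤ n := Nat.cast_le.mpr hmn
    linarith
  have he_tendsto : Tendsto e atTop (𝓝 0) := by
    apply Tendsto.div_atTop (tendsto_const_nhds)
    apply Filter.tendsto_atTop_add_const_right
    exact tendsto_natCast_atTop_atTop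
  have hue_lt_A : ∀ n, u (e n) < A := fun n => huA (e n) (he_pos n) ((he_lt n).le.trans ht.2.le)
  have hut_lt_ue : ∀ n, u t < u (e n) :=
    fun n => hanti (hmem (e n) (he_pos n).le ((he_lt n).le.trans ht.2.le))
      (hmem t ht.1.le ht.2.le) (he_lt n)
  have hue_tendsto : Tendsto (fun n => u (e n)) atTop (𝓝 A) := by
    have h1 : Tendsto e atTop (𝓝[Set.Icc 0 T] 0) := by
      apply tendsto_nhdsWithin_of_tendsto_nhds_of_eventually_within _ he_tendsto
      exact Filter.Eventually.of_forall fun n => ⟨(he_pos n).le, (he_lt n).le.trans ht.2.le⟩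
    have h2 := (hcont 0 (hmem 0 le_rfl hT.le)).tendsto.comp h1
    rwa [h0] at h2
  -- continuity of g on each closed interval [u t, u (e n)]
  have hgcontn : ∀ n, ContinuousOn g (Set.Icc (u t) (u (e n))) := by
    intro n s hs
    have hsA : s < A := lt_of_le_of_lt hs.2 (hue_lt_A n)
    obtain ⟨hp, hd⟩ := hposA s hs.1 hsA
    apply ContinuousAt.continuousWithinAt
    apply Real.continuous_sqrt.continuousAt.comp
    exact ContinuousAt.div (by fun_prop) (by fun_prop) (ne_of_gt hd)
  have hintn : ∀ n, IntegrableOn g (Set.Ioc (u t) (u (e n))) :=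
    fun n => ((hgcontn n).integrableOn_Icc).mono_set Set.Ioc_subset_Icc_self
  -- value of the integral over each Ioc
  have hvaln : ∀ n, (∫ x in Set.Ioc (u t) (u (e n)), g x) = t - e n := by
    intro n
    rw [← intervalIntegral.integral_of_le (hut_lt_ue n).le]
    exact hstep (e n) (he_pos n) (he_lt n).le
  -- integrability on Ioc (u t) A
  have hInt : IntegrableOn g (Set.Ioc (u t) A) := by
    apply MeasureTheory.integrableOn_Ioc_of_intervalIntegral_norm_bounded_right
      (I := t) (b := fun n => u (e n)) hintn hue_tendsto
    apply Filter.Eventually.of_forall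
    intro n
    have hnorm : (∫ x in Set.Ioc (u t) (u (e n)), ‖g x‖)
        = ∫ x in Set.Ioc (u t) (u (e n)), g x := by
      apply MeasureTheory.integral_congr_ae
      exact Filter.Eventually.of_forall fun x => by
        show ‖g x‖ = g x
        rw [Real.norm_eq_abs, abs_of_nonneg (hgnn x)]
    rw [hnorm, hvaln n]
    linarith [he_pos n]
  -- monotone family of sets
  set s : ℕ → Set ℝ := fun n => Set.Ioc (u t) (u (e n)) with hsdef
  have hmono : Monotone s := by
    intro m n hmn
    apply Set.Ioc_subset_Ioc le_rfl
    exact hanti.antitoneOn (hmem (e n) (he_pos n).le ((he_lt n).le.trans ht.2.le))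
      (hmem (e m) (he_pos m).le ((he_lt m).le.trans ht.2.le)) (he_anti m n hmn)
  have hUnion : (⋃ n, s n) = Set.Ioo (u t) A := by
    ext x
    simp only [Set.mem_iUnion, hsdef, Set.mem_Ioc, Set.mem_Ioo]
    constructor
    · rintro ⟨n, h1, h2⟩; exact ⟨h1, lt_of_le_of_lt h2 (hue_lt_A n)⟩
    · rintro ⟨h1, h2⟩
      obtain ⟨n, hn⟩ := (hue_tendsto.eventually (eventually_gt_nhds h2)).exists
      exact ⟨n, h1, hn.le⟩
  have hIntU : IntegrableOn g (⋃ n, s n) := by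
    rw [hUnion]
    exact hInt.mono_set Set.Ioo_subset_Ioc_self
  have htend1 : Tendsto (fun n => ∫ x in s n, g x) atTop (𝓝 (∫ x in ⋃ n, s n, g x)) :=
    MeasureTheory.tendsto_setIntegral_of_monotone (fun n => measurableSet_Ioc) hmono hIntU
  have htend2 : Tendsto (fun n => ∫ x in s n, g x) atTop (𝓝 t) := by
    have : (fun n => ∫ x in s n, g x) = fun n => t - e n := funext hvaln
    rw [this]
    simpa using tendsto_const_nhds.sub he_tendsto
  have hfinal : (∫ x in ⋃ n, s n, g x) = t := tendsto_nhds_unique htend1 htend2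
  rw [intervalIntegral.integral_of_le (huA t ht.1 ht.2.le).le,
    MeasureTheory.integral_Ioc_eq_integral_Ioo]
  rw [← hUnion]
  exact hfinal.symm
end

section
/- Let α, β, ω, A be real numbers with ω ≠ 0, let u₀(t) = A·cos(ωt), and define u₁(t) = A·cos(ωt) + (A³/16)·sin(ωt)·[2ωt·(2α − 3β) + (2α − β)·sin(2ωt)]. Then u₁ is twice continuously differentiable, u₁(0) = A, u₁'(0) = 0, and for all t ∈ ℝ, u₁''(t) + ω²·u₁(t) + α·u₀(t)²·u₀''(t) + α·u₀(t)·u₀'(t)² + βω²·u₀(t)³ = 0. -/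
/-!
By `sin x * sin (2x) = (cos x - cos (3x)) / 2`, `u₁` is a combination of `cos ωt`, the secular
term `t sin ωt` and `cos 3ωt`. The operator `f ↦ f'' + ω² f` kills `cos ωt` and sends the other
two to multiples of `cos ωt` and `cos 3ωt`, while the forcing built from `u₀` reduces, through
`sin² = 1 - cos²` and `cos 3x = 4 cos³ x - 3 cos x`, to the opposite combination.
-/

open Real

noncomputable def resonantTrig (ω p a b t : ℝ) : ℝ :=
  p * cos (ω * t) + a * (t * sin (ω * t)) + b * cos (3 * ω * t)

section
variable (ω p a b : ℝ)

theorem contDiff_resonantTrig {n : WithTop ℕ∞} : ContDiff ℝ n (resonantTrig ω p a b) := by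
  unfold resonantTrig; fun_prop

theorem hasDerivAt_resonantTrig (t : ℝ) :
    HasDerivAt (resonantTrig ω p a b)
      (-(p * ω * sin (ω * t)) + a * (sin (ω * t) + ω * t * cos (ω * t))
        - 3 * b * ω * sin (3 * ω * t)) t := by
  have hc := ((hasDerivAt_id t).const_mul ω).cos
  have hs := ((hasDerivAt_id t).const_mul ω).sin
  have hc₃ := ((hasDerivAt_id t).const_mul (3 * ω)).cos
  exact (((hc.const_mul p).add (((hasDerivAt_id t).mul hs).const_mul a)).add
    (hc₃.const_mul b)).congr_deriv (by simp only [id]; ring)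

theorem deriv_resonantTrig :
    deriv (resonantTrig ω p a b) = fun t => -(p * ω * sin (ω * t))
      + a * (sin (ω * t) + ω * t * cos (ω * t)) - 3 * b * ω * sin (3 * ω * t) :=
  funext fun t => (hasDerivAt_resonantTrig ω p a b t).deriv

theorem deriv_resonantTrig_zero : deriv (resonantTrig ω p a b) 0 = 0 := by
  simp [deriv_resonantTrig]

theorem deriv_deriv_resonantTrig (t : ℝ) :
    deriv (deriv (resonantTrig ω p a b)) t
      = 2 * a * ω * cos (ω * t) - 8 * b * ω ^ 2 * cos (3 * ω * t)
        - ω ^ 2 * resonantTrig ω p a b t := by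
  have hc := ((hasDerivAt_id t).const_mul ω).cos
  have hs := ((hasDerivAt_id t).const_mul ω).sin
  have hs₃ := ((hasDerivAt_id t).const_mul (3 * ω)).sin
  have h : HasDerivAt (deriv (resonantTrig ω p a b))
      (2 * a * ω * cos (ω * t) - 8 * b * ω ^ 2 * cos (3 * ω * t)
        - ω ^ 2 * resonantTrig ω p a b t) t := by
    rw [deriv_resonantTrig]
    exact ((hs.const_mul (p * ω)).neg.add ((hs.add (((hasDerivAt_id t).const_mul ω).mul hc)).const_mul
      a)).sub (hs₃.const_mul (3 * b * ω)) |>.congr_deriv (by simp only [id, resonantTrig]; ring)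
  exact h.deriv

end

theorem sin_mul_sin_two_mul (x : ℝ) : sin x * sin (2 * x) = (cos x - cos (3 * x)) / 2 := by
  rw [sin_two_mul, cos_three_mul]
  linear_combination (2 * cos x) * sin_sq_add_cos_sq x

theorem cantilever_first_approximation_general (α β ω A : ℝ)
    (u₀ u₁ : ℝ → ℝ)
    (hu₀ : ∀ t, u₀ t = A * Real.cos (ω * t))
    (hu₁ : ∀ t, u₁ t = A * Real.cos (ω * t) + A ^ 3 / 16 * Real.sin (ω * t)
      * (2 * ω * t * (2 * α - 3 * β) + (2 * α - β) * Real.sin (2 * ω * t))) :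
    ContDiff ℝ 2 u₁ ∧ u₁ 0 = A ∧ deriv u₁ 0 = 0 ∧
    ∀ t, deriv (deriv u₁) t + ω ^ 2 * u₁ t
      + α * (u₀ t) ^ 2 * deriv (deriv u₀) t + α * u₀ t * (deriv u₀ t) ^ 2
      + β * ω ^ 2 * (u₀ t) ^ 3 = 0 := by
  have hu₀ : u₀ = resonantTrig ω A 0 0 := funext fun t => by simp [hu₀, resonantTrig]
  have hu₁ : u₁ = resonantTrig ω (A + A ^ 3 * (2 * α - β) / 32)
      (A ^ 3 * ω * (2 * α - 3 * β) / 8) (-(A ^ 3 * (2 * α - β) / 32)) :=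
    funext fun t => by
      rw [hu₁, resonantTrig, mul_assoc 2 ω t, mul_assoc 3 ω t]
      linear_combination A ^ 3 / 16 * (2 * α - β) * sin_mul_sin_two_mul (ω * t)
  subst hu₀ hu₁
  refine ⟨contDiff_resonantTrig .., by simp [resonantTrig], deriv_resonantTrig_zero .., fun t => ?_⟩
  rw [deriv_deriv_resonantTrig, deriv_deriv_resonantTrig]
  simp only [deriv_resonantTrig, resonantTrig]
  rw [mul_assoc 3 ω t, cos_three_mul]
  linear_combination α * A ^ 3 * ω ^ 2 * cos (ω * t) * sin_sq_add_cos_sq (ω * t)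

/-- The first-order Laplace-transform approximation
`u₁(t) = A cos(ωt) + (A³/16) sin(ωt)[2ωt(2α − 3β) + (2α − β) sin(2ωt)]` is
twice continuously differentiable, satisfies `u₁(0) = A`, `u₁'(0) = 0`, and
`u₁'' + ω²u₁ + αu₀²u₀'' + αu₀(u₀')² + βω²u₀³ = 0` where `u₀(t) = A cos(ωt)`. -/
theorem cantilever_first_approximation (α β ω A : ℝ) (hω : ω ≠ 0)
    (u₀ u₁ : ℝ → ℝ)
    (hu₀ : ∀ t, u₀ t = A * Real.cos (ω * t))
    (hu₁ : ∀ t, u₁ t = A * Real.cos (ω * t) + A ^ 3 / 16 * Real.sin (ω * t)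
      * (2 * ω * t * (2 * α - 3 * β) + (2 * α - β) * Real.sin (2 * ω * t))) :
    ContDiff ℝ 2 u₁ ∧ u₁ 0 = A ∧ deriv u₁ 0 = 0 ∧
    ∀ t, deriv (deriv u₁) t + ω ^ 2 * u₁ t
      + α * (u₀ t) ^ 2 * deriv (deriv u₀) t + α * u₀ t * (deriv u₀ t) ^ 2
      + β * ω ^ 2 * (u₀ t) ^ 3 = 0 :=
  cantilever_first_approximation_general α β ω A u₀ u₁ hu₀ hu₁
end

section
/- Let α, β, ω, A be real numbers with ω ≠ 0, let T > 0, and let (uₙ) be a sequence of twice continuously differentiable functions on [0,T] satisfying the iteration uₙ(t) = A·cos(ωt) − (1/ω)·∫₀ᵗ sin(ω(t−x))·uₙ₋₁(x)·[α·uₙ₋₁(x)·uₙ₋₁''(x) + α·uₙ₋₁'(x)² + βω²·uₙ₋₁(x)²] dx for all n ≥ 1 and t ∈ [0,T]. Suppose there is a twice continuously differentiable function u on [0,T] such that uₙ → u, uₙ' → u', and uₙ'' → u'' uniformly on [0,T]. Then u satisfies the cantilever beam equation u''(t) + ω²u(t) + αu(t)²u''(t) + αu(t)u'(t)² + βω²u(t)³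 = 0 on [0,T] with u(0) = A and u'(0) = 0. -/
/-!
Passing to the limit in the iteration, whose integrand is a continuous function of `x` and of the
jet `(uₙ, uₙ', uₙ'')` converging uniformly on `[0, T]`, shows that `u` satisfies the integral
equation `u t = A cos ωt - (1/ω) ∫₀ᵗ sin (ω (t - x)) F x dx` with
`F = u (α u u'' + α u'² + β ω² u²)`.
This is the variation-of-constants formula for `v'' + ω² v = -F`, `v 0 = A`, `v' 0 = 0`: expanding
`sin (ω (t - x))` reduces its derivatives to the fundamental theorem of calculus, after extending
`F` continuously beyond `[0, T]`. As derivatives within `[0, T]` are unique, `u'` and `u''` are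
those of the formula on all of `[0, T]`, endpoints included.
-/

open Filter Set Topology Real intervalIntegral
open scoped Interval

theorem TendstoUniformlyOn.prodMk_diag {ι α β γ : Type*} [UniformSpace β] [UniformSpace γ]
    {F : ι → α → β} {f : α → β} {G : ι → α → γ} {g : α → γ} {p : Filter ι} {s : Set α}
    (hF : TendstoUniformlyOn F f p s) (hG : TendstoUniformlyOn G g p s) :
    TendstoUniformlyOn (fun i a => (F i a, G i a)) (fun a => (f a, g a)) p s :=
  fun u hu => ((hF.prodMk hG) u hu).diag_of_prod

theorem Continuous.comp_tendstoUniformlyOn_of_isCompact {ι α β γ : Type*} [TopologicalSpace α]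
    [PseudoMetricSpace β] [ProperSpace β] [UniformSpace γ] {F : ι → α → β} {f : α → β}
    {p : Filter ι} {K : Set α} {g : β → γ} (hg : Continuous g) (hK : IsCompact K)
    (hf : ContinuousOn f K) (h : TendstoUniformlyOn F f p K) :
    TendstoUniformlyOn (fun i x => g (F i x)) (fun x => g (f x)) p K := by
  have hs : IsCompact (Metric.cthickening 1 (f '' K)) := (hK.image_of_continuousOn hf).cthickening
  refine (hs.uniformContinuousOn_of_continuous hg.continuousOn).comp_tendstoUniformlyOn_eventually
    ?_ (fun x hx => Metric.self_subset_cthickening _ (mem_image_of_mem f hx)) h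
  filter_upwards [Metric.tendstoUniformlyOn_iff.1 h 1 one_pos] with i hi x hx
  exact Metric.mem_cthickening_of_dist_le _ _ _ _ (mem_image_of_mem f hx)
    (dist_comm (F i x) _ ▸ (hi x hx).le)

theorem ContinuousOn.exists_continuous_eqOn_Icc {α β : Type*} [LinearOrder α]
    [TopologicalSpace α] [OrderTopology α] [TopologicalSpace β] {a b : α} (hab : a ≤ b) {f : α → β}
    (hf : ContinuousOn f (Icc a b)) : ∃ g : α → β, Continuous g ∧ EqOn g f (Icc a b) :=
  ⟨IccExtend hab ((Icc a b).domRestrict f),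
    continuous_IccExtend_iff.2 (continuousOn_iff_continuous_domRestrict.1 hf),
    fun _ hx => IccExtend_of_mem hab _ hx⟩

theorem eqOn_deriv_of_eqOn_of_hasDerivAt {𝕜 F : Type*} [NontriviallyNormedField 𝕜]
    [NormedAddCommGroup F] [NormedSpace 𝕜 F] {f g g' : 𝕜 → F} {s : Set 𝕜}
    (hs : UniqueDiffOn 𝕜 s) (hf : ∀ x ∈ s, DifferentiableAt 𝕜 f x) (hfg : EqOn f g s)
    (hg : ∀ x ∈ s, HasDerivAt g (g' x) x) : EqOn (deriv f) g' s := fun x hx =>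
  (hs x hx).eq_deriv s (hf x hx).hasDerivAt.hasDerivWithinAt
    ((hg x hx).hasDerivWithinAt.congr hfg (hfg hx))

section VariationOfConstants

variable {ω : ℝ} {F : ℝ → ℝ}

theorem integral_sin_mul_sub_mul (hF : Continuous F) (t : ℝ) :
    ∫ x in (0:ℝ)..t, sin (ω * (t - x)) * F x
      = sin (ω * t) * (∫ x in (0:ℝ)..t, cos (ω * x) * F x)
        - cos (ω * t) * ∫ x in (0:ℝ)..t, sin (ω * x) * F x := by
  rw [← integral_const_mul, ← integral_const_mul,
    ← integral_sub ((by fun_prop : Continuous _).intervalIntegrable _ _)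
      ((by fun_prop : Continuous _).intervalIntegrable _ _)]
  refine integral_congr fun x _ => ?_
  simp only [mul_sub, sin_sub]
  ring

theorem integral_cos_mul_sub_mul (hF : Continuous F) (t : ℝ) :
    ∫ x in (0:ℝ)..t, cos (ω * (t - x)) * F x
      = cos (ω * t) * (∫ x in (0:ℝ)..t, cos (ω * x) * F x)
        + sin (ω * t) * ∫ x in (0:ℝ)..t, sin (ω * x) * F x := by
  rw [← integral_const_mul, ← integral_const_mul,
    ← integral_add ((by fun_prop : Continuous _).intervalIntegrable _ _)
      ((by fun_prop : Continuous _).intervalIntegrable _ _)]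
  refine integral_congr fun x _ => ?_
  simp only [mul_sub, cos_sub]
  ring

theorem hasDerivAt_sin_mul (ω t : ℝ) :
    HasDerivAt (fun t => sin (ω * t)) (ω * cos (ω * t)) t := by
  simpa [mul_comm] using ((hasDerivAt_id t).const_mul ω).sin

theorem hasDerivAt_cos_mul (ω t : ℝ) :
    HasDerivAt (fun t => cos (ω * t)) (-(ω * sin (ω * t))) t := by
  simpa [mul_comm] using ((hasDerivAt_id t).const_mul ω).cos

theorem hasDerivAt_integral_sin_mul_sub_mul (hF : Continuous F) (t : ℝ) :
    HasDerivAt (fun t => ∫ x in (0:ℝ)..t, sin (ω * (t - x)) * F x)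
      (ω * ∫ x in (0:ℝ)..t, cos (ω * (t - x)) * F x) t := by
  have hc : HasDerivAt (fun t => ∫ x in (0:ℝ)..t, cos (ω * x) * F x) (cos (ω * t) * F t) t :=
    ((by fun_prop : Continuous fun x => cos (ω * x) * F x).integral_hasStrictDerivAt 0 t).hasDerivAt
  have hs : HasDerivAt (fun t => ∫ x in (0:ℝ)..t, sin (ω * x) * F x) (sin (ω * t) * F t) t :=
    ((by fun_prop : Continuous fun x => sin (ω * x) * F x).integral_hasStrictDerivAt 0 t).hasDerivAt
  simp only [integral_sin_mul_sub_mul hF, integral_cos_mul_sub_mul hF]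
  refine (((hasDerivAt_sin_mul ω t).mul hc).sub
    ((hasDerivAt_cos_mul ω t).mul hs)).congr_deriv ?_
  ring

theorem hasDerivAt_integral_cos_mul_sub_mul (hF : Continuous F) (t : ℝ) :
    HasDerivAt (fun t => ∫ x in (0:ℝ)..t, cos (ω * (t - x)) * F x)
      (F t - ω * ∫ x in (0:ℝ)..t, sin (ω * (t - x)) * F x) t := by
  have hc : HasDerivAt (fun t => ∫ x in (0:ℝ)..t, cos (ω * x) * F x) (cos (ω * t) * F t) t :=
    ((by fun_prop : Continuous fun x => cos (ω * x) * F x).integral_hasStrictDerivAt 0 t).hasDerivAt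
  have hs : HasDerivAt (fun t => ∫ x in (0:ℝ)..t, sin (ω * x) * F x) (sin (ω * t) * F t) t :=
    ((by fun_prop : Continuous fun x => sin (ω * x) * F x).integral_hasStrictDerivAt 0 t).hasDerivAt
  simp only [integral_sin_mul_sub_mul hF, integral_cos_mul_sub_mul hF]
  refine (((hasDerivAt_cos_mul ω t).mul hc).add
    ((hasDerivAt_sin_mul ω t).mul hs)).congr_deriv ?_
  linear_combination F t * sin_sq_add_cos_sq (ω * t)

noncomputable def oscillatorSolution (A ω : ℝ) (F : ℝ → ℝ) (t : ℝ) : ℝ :=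
  A * cos (ω * t) - (1 / ω) * ∫ x in (0:ℝ)..t, sin (ω * (t - x)) * F x

noncomputable def oscillatorSolutionDeriv (A ω : ℝ) (F : ℝ → ℝ) (t : ℝ) : ℝ :=
  -(A * ω * sin (ω * t)) - ∫ x in (0:ℝ)..t, cos (ω * (t - x)) * F x

theorem hasDerivAt_oscillatorSolution (A : ℝ) (hω : ω ≠ 0) (hF : Continuous F) (t : ℝ) :
    HasDerivAt (oscillatorSolution A ω F) (oscillatorSolutionDeriv A ω F t) t := by
  refine (((hasDerivAt_cos_mul ω t).const_mul A).sub
    ((hasDerivAt_integral_sin_mul_sub_mul hF t).const_mul (1 / ω))).congr_deriv ?_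
  rw [oscillatorSolutionDeriv]
  field_simp

theorem hasDerivAt_oscillatorSolutionDeriv (A : ℝ) (hω : ω ≠ 0) (hF : Continuous F) (t : ℝ) :
    HasDerivAt (oscillatorSolutionDeriv A ω F)
      (-ω ^ 2 * oscillatorSolution A ω F t - F t) t := by
  refine (((hasDerivAt_sin_mul ω t).const_mul (A * ω)).neg.sub
    (hasDerivAt_integral_cos_mul_sub_mul hF t)).congr_deriv ?_
  rw [oscillatorSolution]
  field_simp
  ring

end VariationOfConstants

theorem tendsto_intervalIntegral_comp_of_tendstoUniformlyOn {ι E : Type*} [PseudoMetricSpace E]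
    [ProperSpace E] {l : Filter ι} [l.IsCountablyGenerated] {V : ι → ℝ → E} {v : ℝ → E}
    {Φ : ℝ × E → ℝ} {a b : ℝ} (hΦ : Continuous Φ) (hV : ∀ i, ContinuousOn (V i) [[a, b]])
    (hv : ContinuousOn v [[a, b]]) (h : TendstoUniformlyOn V v l [[a, b]]) :
    Tendsto (fun i => ∫ x in a..b, Φ (x, V i x)) l (𝓝 (∫ x in a..b, Φ (x, v x))) := by
  have hid : TendstoUniformlyOn (fun (_ : ι) (x : ℝ) => x) id l [[a, b]] :=
    fun _ hu => Eventually.of_forall fun _ _ _ => refl_mem_uniformity hu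
  refine TendstoUniformlyOn.tendsto_intervalIntegral_of_continuousOn
    (Eventually.of_forall fun i => hΦ.comp_continuousOn (continuousOn_id.prodMk (hV i)))
    (hΦ.comp_tendstoUniformlyOn_of_isCompact isCompact_uIcc (continuousOn_id.prodMk hv)
      (hid.prodMk_diag h))

theorem eqOn_oscillatorSolution_of_tendstoUniformlyOn {E : Type*} [PseudoMetricSpace E]
    [ProperSpace E] {N : E → ℝ} (hN : Continuous N) {A ω T : ℝ} {w : ℕ → ℝ → ℝ} {u : ℝ → ℝ}
    {V : ℕ → ℝ → E} {v : ℝ → E}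
    (hstep : ∀ n, ∀ t ∈ Icc 0 T, w (n + 1) t = oscillatorSolution A ω (N ∘ V n) t)
    (hw : ∀ t ∈ Icc 0 T, Tendsto (fun n => w n t) atTop (𝓝 (u t)))
    (hV : ∀ n, ContinuousOn (V n) (Icc 0 T)) (hv : ContinuousOn v (Icc 0 T))
    (hVv : TendstoUniformlyOn V v atTop (Icc 0 T)) :
    EqOn u (oscillatorSolution A ω (N ∘ v)) (Icc 0 T) := by
  intro t ht
  have hsub : [[0, t]] ⊆ Icc 0 T := uIcc_subset_Icc ⟨le_rfl, ht.1.trans ht.2⟩ ht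
  refine tendsto_nhds_unique ((hw t ht).comp (tendsto_add_atTop_nat 1)) ?_
  simp only [Function.comp_def, hstep _ t ht, oscillatorSolution]
  exact tendsto_const_nhds.sub <| tendsto_const_nhds.mul <|
    tendsto_intervalIntegral_comp_of_tendstoUniformlyOn
      (Φ := fun p => sin (ω * (t - p.1)) * N p.2) (by fun_prop)
      (fun n => (hV n).mono hsub) (hv.mono hsub) (hVv.mono hsub)

theorem oscillatorSolution_ode_of_eqOn {u F : ℝ → ℝ} {A ω T : ℝ} (hω : ω ≠ 0) (hT : 0 < T)
    (hF : ContinuousOn F (Icc 0 T))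
    (hu : ∀ t ∈ Icc 0 T, DifferentiableAt ℝ u t ∧ DifferentiableAt ℝ (deriv u) t)
    (huF : EqOn u (oscillatorSolution A ω F) (Icc 0 T)) :
    (∀ t ∈ Icc 0 T, deriv (deriv u) t = -ω ^ 2 * u t - F t) ∧ u 0 = A ∧ deriv u 0 = 0 := by
  obtain ⟨G, hG, hGF⟩ := hF.exists_continuous_eqOn_Icc hT.le
  have huG : EqOn u (oscillatorSolution A ω G) (Icc 0 T) := fun t ht => by
    rw [huF ht, oscillatorSolution, oscillatorSolution]
    congr 2
    exact integral_congr fun x hx => by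
      simp only [hGF (uIcc_subset_Icc ⟨le_rfl, hT.le⟩ ht hx)]
  have hu' : EqOn (deriv u) (oscillatorSolutionDeriv A ω G) (Icc 0 T) :=
    eqOn_deriv_of_eqOn_of_hasDerivAt (uniqueDiffOn_Icc hT) (fun t ht => (hu t ht).1) huG
      fun t _ => hasDerivAt_oscillatorSolution A hω hG t
  have hu'' : EqOn (deriv (deriv u)) (fun t => -ω ^ 2 * oscillatorSolution A ω G t - G t)
      (Icc 0 T) :=
    eqOn_deriv_of_eqOn_of_hasDerivAt (uniqueDiffOn_Icc hT) (fun t ht => (hu t ht).2) hu'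
      fun t _ => hasDerivAt_oscillatorSolutionDeriv A hω hG t
  have h0 : (0:ℝ) ∈ Icc 0 T := ⟨le_rfl, hT.le⟩
  refine ⟨fun t ht => ?_, by simpa [oscillatorSolution] using huG h0,
    by simpa [oscillatorSolutionDeriv] using hu' h0⟩
  rw [hu'' ht, huG ht, ← hGF ht]

noncomputable def jet2 (v : ℝ → ℝ) (x : ℝ) : ℝ × ℝ × ℝ := (v x, deriv v x, deriv (deriv v) x)

def cantileverNonlinearity (α β ω : ℝ) (p : ℝ × ℝ × ℝ) : ℝ :=
  p.1 * (α * p.1 * p.2.2 + α * p.2.1 ^ 2 + β * ω ^ 2 * p.1 ^ 2)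

@[fun_prop]
theorem continuous_cantileverNonlinearity (α β ω : ℝ) :
    Continuous (cantileverNonlinearity α β ω) := by
  unfold cantileverNonlinearity
  fun_prop

theorem continuousOn_jet2 {v : ℝ → ℝ} {s : Set ℝ}
    (h : ∀ t ∈ s, DifferentiableAt ℝ v t ∧ DifferentiableAt ℝ (deriv v) t
      ∧ ContinuousAt (deriv (deriv v)) t) : ContinuousOn (jet2 v) s := fun t ht =>
  let ⟨h0, h1, h2⟩ := h t ht
  (h0.continuousAt.prodMk (h1.continuousAt.prodMk h2)).continuousWithinAt

/-- If a sequence of twice continuously differentiable functions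
on `[0, T]` satisfies the Laplace-transform iteration and `uₙ`, `uₙ'`, `uₙ''`
converge uniformly on `[0, T]` to a twice continuously differentiable `u` and
its derivatives, then `u` solves the cantilever beam equation on `[0, T]`
with `u(0) = A`, `u'(0) = 0`. -/
theorem cantilever_uniform_limit_solves (α β ω A T : ℝ) (hω : ω ≠ 0)
    (hT : 0 < T) (useq : ℕ → ℝ → ℝ) (u : ℝ → ℝ)
    (hC2 : ∀ n, ∀ t ∈ Set.Icc (0:ℝ) T, DifferentiableAt ℝ (useq n) t
      ∧ DifferentiableAt ℝ (deriv (useq n)) t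
      ∧ ContinuousAt (deriv (deriv (useq n))) t)
    (hiter : ∀ n : ℕ, 1 ≤ n → ∀ t ∈ Set.Icc (0:ℝ) T,
      useq n t = A * Real.cos (ω * t)
        - (1 / ω) * ∫ x in (0:ℝ)..t, Real.sin (ω * (t - x)) * useq (n - 1) x
            * (α * useq (n - 1) x * deriv (deriv (useq (n - 1))) x
                + α * (deriv (useq (n - 1)) x) ^ 2
                + β * ω ^ 2 * (useq (n - 1) x) ^ 2))
    (huC2 : ∀ t ∈ Set.Icc (0:ℝ) T, DifferentiableAt ℝ u t
      ∧ DifferentiableAt ℝ (deriv u) t ∧ ContinuousAt (deriv (deriv u)) t)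
    (hconv : TendstoUniformlyOn (fun n => useq n) u Filter.atTop
      (Set.Icc (0:ℝ) T))
    (hconv' : TendstoUniformlyOn (fun n => deriv (useq n)) (deriv u)
      Filter.atTop (Set.Icc (0:ℝ) T))
    (hconv'' : TendstoUniformlyOn (fun n => deriv (deriv (useq n)))
      (deriv (deriv u)) Filter.atTop (Set.Icc (0:ℝ) T)) :
    (∀ t ∈ Set.Icc (0:ℝ) T, deriv (deriv u) t + ω ^ 2 * u t
      + α * (u t) ^ 2 * deriv (deriv u) t + α * u t * (deriv u t) ^ 2
      + β * ω ^ 2 * (u t) ^ 3 = 0) ∧ u 0 = A ∧ deriv u 0 = 0 := by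
  have hN := continuous_cantileverNonlinearity α β ω
  have hstep : ∀ n, ∀ t ∈ Icc 0 T, useq (n + 1) t
      = oscillatorSolution A ω (cantileverNonlinearity α β ω ∘ jet2 (useq n)) t := by
    intro n t ht
    rw [hiter (n + 1) (Nat.le_add_left 1 n) t ht, oscillatorSolution, Nat.add_sub_cancel]
    simp only [mul_assoc (sin _)]
    rfl
  have hju := continuousOn_jet2 huC2
  have hlim := eqOn_oscillatorSolution_of_tendstoUniformlyOn hN hstep
    (fun t ht => hconv.tendsto_at ht) (fun n => continuousOn_jet2 (hC2 n)) hju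
    (hconv.prodMk_diag (hconv'.prodMk_diag hconv''))
  obtain ⟨hode, hu0, hu'0⟩ := oscillatorSolution_ode_of_eqOn hω hT (hN.comp_continuousOn hju)
    (fun t ht => ⟨(huC2 t ht).1, (huC2 t ht).2.1⟩) hlim
  refine ⟨fun t ht => ?_, hu0, hu'0⟩
  have hu'' := hode t ht
  simp only [cantileverNonlinearity, jet2, Function.comp_apply] at hu''
  linear_combination hu''
end

section
/- Let α ≥ 0, β ≥ 0 and ω ≠ 0 be real numbers, let A be real, and let u : ℝ → ℝ be a twice differentiable solution of the cantilever beam equation u'' + ω²u + αu²u'' + αu(u')² + βω²u³ = 0 with u(0) = A and u'(0) = 0. Then |u(t)| ≤ |A| for all t ∈ ℝ. -/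
/-- If `α ≥ 0`, `β ≥ 0`, `ω ≠ 0` and `u` is a twice
differentiable solution of the cantilever beam equation
`u'' + ω²u + αu²u'' + αu(u')² + βω²u³ = 0` with `u(0) = A`, `u'(0) = 0`,
then `|u(t)| ≤ |A|` for all `t`. -/
theorem cantilever_amplitude_bound (α β ω A : ℝ) (hα : 0 ≤ α) (hβ : 0 ≤ β)
    (hω : ω ≠ 0) (u : ℝ → ℝ)
    (hu : ∀ t, DifferentiableAt ℝ u t)
    (hu' : ∀ t, DifferentiableAt ℝ (deriv u) t)
    (hode : ∀ t, deriv (deriv u) t + ω ^ 2 * u t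
      + α * (u t) ^ 2 * deriv (deriv u) t + α * u t * (deriv u t) ^ 2
      + β * ω ^ 2 * (u t) ^ 3 = 0)
    (h0 : u 0 = A) (h0' : deriv u 0 = 0) :
    ∀ t, |u t| ≤ |A| := by
  set E : ℝ → ℝ := fun t =>
    (1 + α * u t ^ 2) * (deriv u t) ^ 2 + ω ^ 2 * (u t ^ 2 + β / 2 * u t ^ 4)
    with hE_def
  have hE : ∀ t, HasDerivAt E 0 t := by
    intro t
    have h1 : HasDerivAt u (deriv u t) t := (hu t).hasDerivAt
    have h2 : HasDerivAt (deriv u) (deriv (deriv u) t) t := (hu' t).hasDerivAt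
    have hA2 : HasDerivAt (fun s => u s ^ 2) (2 * u t ^ 1 * deriv u t) t := h1.pow 2
    have hA4 : HasDerivAt (fun s => u s ^ 4) (4 * u t ^ 3 * deriv u t) t := h1.pow 4
    have hB : HasDerivAt (fun s => (deriv u s) ^ 2)
        (2 * deriv u t ^ 1 * deriv (deriv u) t) t := h2.pow 2
    have hC : HasDerivAt (fun s => 1 + α * u s ^ 2)
        (0 + α * (2 * u t ^ 1 * deriv u t)) t :=
      (hasDerivAt_const t (1:ℝ)).add (hA2.const_mul α)
    have hD : HasDerivAt E
        ((0 + α * (2 * u t ^ 1 * deriv u t)) * (deriv u t) ^ 2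
          + (1 + α * u t ^ 2) * (2 * deriv u t ^ 1 * deriv (deriv u) t)
          + ω ^ 2 * (2 * u t ^ 1 * deriv u t + β / 2 * (4 * u t ^ 3 * deriv u t))) t :=
      (hC.mul hB).add ((hA2.add (hA4.const_mul (β / 2))).const_mul (ω ^ 2))
    convert hD using 1
    linear_combination (-(2 * deriv u t)) * hode t
  have hconst : ∀ t, E t = E 0 := by
    intro t
    have hdiff : Differentiable ℝ E := fun s => (hE s).differentiableAt
    have hderiv : ∀ s, deriv E s = 0 := fun s => (hE s).deriv
    exact is_const_of_deriv_eq_zero hdiff hderiv t 0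
  intro t
  have hEt := hconst t
  have hpos : (0:ℝ) < ω ^ 2 := by positivity
  have h1 : u t ^ 2 + β / 2 * u t ^ 4 ≤ A ^ 2 + β / 2 * A ^ 4 := by
    have hnn : 0 ≤ (1 + α * u t ^ 2) * (deriv u t) ^ 2 := by positivity
    have hE0 : E 0 = ω ^ 2 * (A ^ 2 + β / 2 * A ^ 4) := by
      simp [hE_def, h0, h0']
    rw [hE0] at hEt
    have hEt' : (1 + α * u t ^ 2) * (deriv u t) ^ 2
        + ω ^ 2 * (u t ^ 2 + β / 2 * u t ^ 4)
        = ω ^ 2 * (A ^ 2 + β / 2 * A ^ 4) := by simpa [hE_def] using hEt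
    have : ω ^ 2 * (u t ^ 2 + β / 2 * u t ^ 4) ≤ ω ^ 2 * (A ^ 2 + β / 2 * A ^ 4) := by
      linarith
    exact le_of_mul_le_mul_left this hpos
  have h2 : u t ^ 2 ≤ A ^ 2 := by nlinarith [sq_nonneg (u t), sq_nonneg A, hβ, mul_nonneg hβ (sq_nonneg (u t)), mul_nonneg hβ (sq_nonneg A)]
  rw [← Real.sqrt_sq_eq_abs, ← Real.sqrt_sq_eq_abs]
  exact Real.sqrt_le_sqrt h2
end
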